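/- Let T be a miss hyperspace topology (a topology on the powerset of X with a base of sets of the form ↓G = {A | A ⊆ G}) and 𝒮 an ideal. Then for every collection ℬ, cl^T(cl_{τ(𝒮)}(ℬ)) ⊆ cl_𝒮^T(ℬ) ⊆ cl_{τ(𝒮)}(cl^T(ℬ)), where cl_𝒮^T(ℬ) = {A | ∀ S ∈ 𝒮, A ∈ cl^T({B ∩ S | B ∈ ℬ})}. -/

import Mathlib

open Set Topology

def IsIdeal {X : Type*} (𝒮 : Set (Set X)) : Prop :=
  ∅ ∈ 𝒮 ∧ (∀ S ∈ 𝒮, ∀ S' ⊆ S, S' ∈ 𝒮) ∧ (∀ S ∈ 𝒮, ∀ S' ∈ 𝒮, S ∪ S' ∈ 𝒮)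

def tauS {X : Type*} (𝒮 : Set (Set X)) : TopologicalSpace (Set X) :=
  TopologicalSpace.generateFrom
    {U | ∃ S ∈ 𝒮, ∃ S' ∈ 𝒮, U = {C : Set X | S ⊆ C ∧ C ∩ S' = ∅}}

def upperModCl {X : Type*} (𝒮 : Set (Set X)) (T : TopologicalSpace (Set X))
    (𝒜 : Set (Set X)) : Set (Set X) :=
  {A | ∀ S ∈ 𝒮, A ∈ @closure (Set X) T {B' : Set X | ∃ B ∈ 𝒜, B' = B ∩ S}}

/-!
In a miss topology the closure of `𝒜` is its upward closure: the smallest basic neighbourhood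
of `A` is `↓A`. For `τ(𝒮)` the intervals `[S, S']` are closed under intersection, so they form a
basis. The first inclusion then tests `C ∈ cl_{τ(𝒮)} ℬ` against `[∅, S \ C]`; for the second,
given `[S, S'] ∋ A` pick `B ∈ ℬ` with `B ∩ (S ∪ S') ⊆ A`, and `B ∪ S` lies in `[S, S']` and in
the upward closure of `ℬ`.
-/

namespace IsIdeal

variable {X : Type*} {𝒮 : Set (Set X)}

theorem diff_mem (hS : IsIdeal 𝒮) {S : Set X} (hSm : S ∈ 𝒮) (C : Set X) : S \ C ∈ 𝒮 :=
  hS.2.1 S hSm _ sdiff_subset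

theorem union_mem (hS : IsIdeal 𝒮) {S S' : Set X} (hSm : S ∈ 𝒮) (hS'm : S' ∈ 𝒮) :
    S ∪ S' ∈ 𝒮 :=
  hS.2.2 S hSm S' hS'm

end IsIdeal

section MissTopology

variable {X : Type*} {T : TopologicalSpace (Set X)}

theorem mem_closure_iff_exists_subset_of_isTopologicalBasis
    (hmiss : @TopologicalSpace.IsTopologicalBasis (Set X) T
      {𝒢 : Set (Set X) | ∃ G : Set X, 𝒢 = {A : Set X | A ⊆ G}})
    {𝒜 : Set (Set X)} {A : Set X} :
    A ∈ closure[T] 𝒜 ↔ ∃ B ∈ 𝒜, B ⊆ A := by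
  rw [@TopologicalSpace.IsTopologicalBasis.mem_closure_iff _ T _ hmiss]
  constructor
  · intro h
    obtain ⟨B, hBA, hB𝒜⟩ := h _ ⟨A, rfl⟩ Subset.rfl
    exact ⟨B, hB𝒜, hBA⟩
  · rintro ⟨B, hB𝒜, hBA⟩ _ ⟨G, rfl⟩ hAG
    exact ⟨B, hBA.trans hAG, hB𝒜⟩

end MissTopology

section TauS

variable {X : Type*} {𝒮 : Set (Set X)}

/-- The interval `[S, S']` of the paper. -/
def sandwich (S S' : Set X) : Set (Set X) := {C | S ⊆ C ∧ C ∩ S' = ∅}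

theorem sandwich_inter_sandwich (S₁ S₁' S₂ S₂' : Set X) :
    sandwich S₁ S₁' ∩ sandwich S₂ S₂' = sandwich (S₁ ∪ S₂) (S₁' ∪ S₂') := by
  ext C
  simp only [sandwich, mem_inter_iff, mem_ofPred_eq, union_subset_iff, inter_union_distrib_left,
    union_empty_iff]
  tauto

theorem sandwich_empty_empty : sandwich (∅ : Set X) ∅ = univ := by
  ext C
  simp [sandwich]

theorem isTopologicalBasis_sandwich (hS : IsIdeal 𝒮) :
    @TopologicalSpace.IsTopologicalBasis (Set X) (tauS 𝒮)
      {U | ∃ S ∈ 𝒮, ∃ S' ∈ 𝒮, U = sandwich S S'} := by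
  have hbasis := @TopologicalSpace.isTopologicalBasis_of_subbasis_of_inter _ (tauS 𝒮)
    {U | ∃ S ∈ 𝒮, ∃ S' ∈ 𝒮, U = sandwich S S'} rfl (by
      rintro _ ⟨S₁, hS₁, S₁', hS₁', rfl⟩ _ ⟨S₂, hS₂, S₂', hS₂', rfl⟩
      exact ⟨_, hS.union_mem hS₁ hS₂, _, hS.union_mem hS₁' hS₂', sandwich_inter_sandwich ..⟩)
  have huniv : univ ∈ {U | ∃ S ∈ 𝒮, ∃ S' ∈ 𝒮, U = sandwich S S'} :=
    ⟨∅, hS.1, ∅, hS.1, sandwich_empty_empty.symm⟩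
  rwa [insert_eq_of_mem huniv] at hbasis

theorem mem_closure_tauS_iff (hS : IsIdeal 𝒮) {𝒞 : Set (Set X)} {A : Set X} :
    A ∈ closure[tauS 𝒮] 𝒞 ↔
      ∀ S ∈ 𝒮, ∀ S' ∈ 𝒮, S ⊆ A → A ∩ S' = ∅ → ∃ C ∈ 𝒞, S ⊆ C ∧ C ∩ S' = ∅ := by
  rw [@TopologicalSpace.IsTopologicalBasis.mem_closure_iff _ (tauS 𝒮) _
    (isTopologicalBasis_sandwich hS)]
  constructor
  · intro h S hSm S' hS'm hSA hAS'
    obtain ⟨C, hC, hC𝒞⟩ := h _ ⟨S, hSm, S', hS'm, rfl⟩ ⟨hSA, hAS'⟩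
    exact ⟨C, hC𝒞, hC⟩
  · rintro h _ ⟨S, hSm, S', hS'm, rfl⟩ ⟨hSA, hAS'⟩
    obtain ⟨C, hC𝒞, hC⟩ := h S hSm S' hS'm hSA hAS'
    exact ⟨C, hC, hC𝒞⟩

theorem exists_inter_subset_of_mem_closure_tauS (hS : IsIdeal 𝒮) {ℬ : Set (Set X)}
    {C : Set X} (hC : C ∈ closure[tauS 𝒮] ℬ) {S : Set X} (hSm : S ∈ 𝒮) :
    ∃ B ∈ ℬ, B ∩ S ⊆ C := by
  obtain ⟨B, hBℬ, -, hB⟩ := (mem_closure_tauS_iff hS).mp hC ∅ hS.1 (S \ C)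
    (hS.diff_mem hSm C) (empty_subset C) (inter_sdiff_self C S)
  refine ⟨B, hBℬ, fun x hx => ?_⟩
  by_contra hxC
  exact (eq_empty_iff_forall_notMem.mp hB) x ⟨hx.1, hx.2, hxC⟩

end TauS

theorem stmt_17 {X : Type*} (𝒮 : Set (Set X)) (hS : IsIdeal 𝒮)
    (T : TopologicalSpace (Set X))
    (hmiss : @TopologicalSpace.IsTopologicalBasis (Set X) T
      {𝒢 : Set (Set X) | ∃ G : Set X, 𝒢 = {A : Set X | A ⊆ G}}) :
    ∀ ℬ : Set (Set X),
      @closure (Set X) T (@closure (Set X) (tauS 𝒮) ℬ) ⊆ upperModCl 𝒮 T ℬ ∧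
      upperModCl 𝒮 T ℬ ⊆ @closure (Set X) (tauS 𝒮) (@closure (Set X) T ℬ) := by
  intro ℬ
  have miss_closure := @mem_closure_iff_exists_subset_of_isTopologicalBasis X T hmiss
  constructor
  · intro A hA S hSm
    obtain ⟨C, hC, hCA⟩ := miss_closure.mp hA
    obtain ⟨B, hBℬ, hBC⟩ := exists_inter_subset_of_mem_closure_tauS hS hC hSm
    exact miss_closure.mpr ⟨B ∩ S, ⟨B, hBℬ, rfl⟩, hBC.trans hCA⟩
  · intro A hA
    refine (mem_closure_tauS_iff hS).mpr fun S hSm S' hS'm hSA hAS' => ?_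
    obtain ⟨_, ⟨B, hBℬ, rfl⟩, hBA⟩ := miss_closure.mp (hA _ (hS.union_mem hSm hS'm))
    refine ⟨B ∪ S, miss_closure.mpr ⟨B, hBℬ, subset_union_left⟩, subset_union_right, ?_⟩
    rw [← subset_empty_iff, ← hAS', union_inter_distrib_right]
    exact union_subset (fun x hx => ⟨hBA ⟨hx.1, Or.inr hx.2⟩, hx.2⟩)
      (inter_subset_inter_left S' hSA)
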